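/- Every coarse-graining λ : G₁ → G₂ of causal-nets factors as λ = λ_ε ∘ λ_ν where λ_ν : G₁ → K is a vertex-coarse-graining and λ_ε : K → G₂ is an edge-coarse-graining; moreover the factorization is unique up to isomorphism: for any two such factorizations through K and K′ there is an isomorphism φ : K → K′ with φ ∘ λ_ν = λ_ν′ and λ_ε′ ∘ φ = λ_ε. -/

import Mathlib

open CategoryTheory

namespace CausalNets

/-- Acyclicity condition for raw directed-multigraph data: every directed cycle
has length zero. -/
def NoCycleData (V E : Type) (s t : E → V) : Prop :=
  letI : Quiver V := ⟨fun a b => { e : E // s e = a ∧ t e = b }⟩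
  ∀ (v : V) (p : Quiver.Path v v), p.length = 0

/-- A causal-net: a finite acyclic directed multigraph (isolated vertices and
parallel edges allowed). -/
structure CausalNet where
  V : Type
  E : Type
  src : E → V
  tgt : E → V
  fintypeV : Fintype V
  fintypeE : Fintype E
  acyclic : NoCycleData V E src tgt

attribute [instance] CausalNet.fintypeV CausalNet.fintypeE

instance CausalNet.quiver (G : CausalNet) : Quiver G.V :=
  ⟨fun a b => { e : G.E // G.src e = a ∧ G.tgt e = b }⟩

/-- The category `Cau` of causal-nets: a morphism `G ⟶ H` is a functor between
the path categories `Paths G.V ⥤ Paths H.V`. -/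
instance : Category CausalNet where
  Hom G H := Paths G.V ⥤ Paths H.V
  id G := 𝟭 (Paths G.V)
  comp φ ψ := φ ⋙ ψ

variable {G H K : CausalNet}

/-- The action of a morphism of causal-nets on vertices (objects). -/
def vmap (φ : G ⟶ H) : G.V → H.V := (φ : Paths G.V ⥤ Paths H.V).obj

/-- The action of a morphism of causal-nets on directed paths (morphisms). -/
def pmap (φ : G ⟶ H) {a b : G.V} (p : Quiver.Path a b) :
    Quiver.Path (vmap φ a) (vmap φ b) :=
  (φ : Paths G.V ⥤ Paths H.V).map p

/-- The quiver arrow corresponding to an edge. -/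
def edgeHom (G : CausalNet) (e : G.E) : G.src e ⟶ G.tgt e := ⟨e, rfl, rfl⟩

/-- The directed path which is the image of the edge `e` under the morphism `φ`. -/
def edgePath (φ : G ⟶ H) (e : G.E) :
    Quiver.Path (vmap φ (G.src e)) (vmap φ (G.tgt e)) :=
  pmap φ (Quiver.Hom.toPath (edgeHom G e))

/-- The underlying edge of a quiver arrow. -/
def homEdge {a b : G.V} (f : a ⟶ b) : G.E := Subtype.val f

/-- The list of edges traversed by a directed path. -/
def pathEdges : {a b : G.V} → Quiver.Path a b → List G.E
  | _, _, Quiver.Path.nil => []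
  | _, _, Quiver.Path.cons p f => pathEdges p ++ [homEdge f]

/-- The list of vertices visited by a directed path (including endpoints). -/
def pathVertices : {a b : G.V} → Quiver.Path a b → List G.V
  | a, _, Quiver.Path.nil => [a]
  | _, b, Quiver.Path.cons p _ => pathVertices p ++ [b]

/-- An edge `e` is a contraction of `φ` if `φ(e)` has length `0`. -/
def IsContractionEdge (φ : G ⟶ H) (e : G.E) : Prop := (edgePath φ e).length = 0

/-- An edge `e` is a segment of `φ` if `φ(e)` has length `1`. -/
def IsSegmentEdge (φ : G ⟶ H) (e : G.E) : Prop := (edgePath φ e).length = 1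

/-- An edge `e` is a subdivision of `φ` if `φ(e)` has length at least `2`. -/
def IsSubdivisionEdge (φ : G ⟶ H) (e : G.E) : Prop := 2 ≤ (edgePath φ e).length

/-- `φ` maps the edge `e` to the length-one path consisting of the edge `h`. -/
def MapsToEdge (φ : G ⟶ H) (e : G.E) (h : H.E) : Prop :=
  pathEdges (edgePath φ e) = [h]

/-- A quotient: a morphism with no null-vertex and no null-edge. -/
def IsQuotientMor (φ : G ⟶ H) : Prop :=
  (∀ v : H.V, ∃ w : G.V, vmap φ w = v) ∧ ∀ h : H.E, ∃ e : G.E, MapsToEdge φ e h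

/-- A coarse-graining: a quotient with no subdivision. -/
def IsCoarseGraining (φ : G ⟶ H) : Prop :=
  IsQuotientMor φ ∧ ∀ e : G.E, ¬ IsSubdivisionEdge φ e

/-- A vertex-coarse-graining: a coarse-graining with no multiple-edge. -/
def IsVertexCoarseGraining (φ : G ⟶ H) : Prop :=
  IsCoarseGraining φ ∧
  ∀ (h : H.E) (e₁ e₂ : G.E), MapsToEdge φ e₁ h → MapsToEdge φ e₂ h → e₁ = e₂

/-- An edge-coarse-graining: a coarse-graining with no multiple-vertex and no
contraction. -/
def IsEdgeCoarseGraining (φ : G ⟶ H) : Prop :=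
  IsCoarseGraining φ ∧ Function.Injective (vmap φ) ∧ ∀ e : G.E, ¬ IsContractionEdge φ e

/-- A merging: a vertex-coarse-graining with no contraction. -/
def IsMerging (φ : G ⟶ H) : Prop :=
  IsVertexCoarseGraining φ ∧ ∀ e : G.E, ¬ IsContractionEdge φ e

/-- A fusion: a coarse-graining with no contraction. -/
def IsFusion (φ : G ⟶ H) : Prop :=
  IsCoarseGraining φ ∧ ∀ e : G.E, ¬ IsContractionEdge φ e

/-- An inclusion: a morphism injective on vertices and on directed paths
(an injective-on-objects faithful functor). -/
def IsInclusion (φ : G ⟶ H) : Prop :=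
  Function.Injective (vmap φ) ∧
  ∀ (a b : G.V) (p q : Quiver.Path a b), pmap φ p = pmap φ q → p = q

/-- An embedding: an inclusion with no subdivision. -/
def IsEmbedding (φ : G ⟶ H) : Prop :=
  IsInclusion φ ∧ ∀ e : G.E, ¬ IsSubdivisionEdge φ e

/-- An immersion: an inclusion such that images of distinct subdivision edges
share no edge. -/
def IsImmersion (φ : G ⟶ H) : Prop :=
  IsInclusion φ ∧
  ∀ e₁ e₂ : G.E, e₁ ≠ e₂ → IsSubdivisionEdge φ e₁ → IsSubdivisionEdge φ e₂ →
    ∀ h : H.E, h ∈ pathEdges (edgePath φ e₁) → h ∉ pathEdges (edgePath φ e₂)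

/-- The internal vertices of a directed path (all visited vertices except the
two endpoints). -/
def internalVertices {a b : G.V} (p : Quiver.Path a b) : List G.V :=
  ((pathVertices p).dropLast).tail

/-- A strong morphism: all internal vertices of images of subdivision edges are
null-vertices. -/
def IsStrong (φ : G ⟶ H) : Prop :=
  ∀ e : G.E, IsSubdivisionEdge φ e →
    ∀ v ∈ internalVertices (edgePath φ e), ∀ w : G.V, vmap φ w ≠ v

/-- A vertex-disjoint morphism: images of distinct subdivision edges share no
internal vertex. -/
def IsVertexDisjoint (φ : G ⟶ H) : Prop :=
  ∀ e₁ e₂ : G.E, e₁ ≠ e₂ → IsSubdivisionEdge φ e₁ → IsSubdivisionEdge φ e₂ →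
    ∀ v : H.V, v ∈ internalVertices (edgePath φ e₁) → v ∉ internalVertices (edgePath φ e₂)

/-- A topological embedding: a strong vertex-disjoint inclusion. -/
def IsTopologicalEmbedding (φ : G ⟶ H) : Prop :=
  IsInclusion φ ∧ IsStrong φ ∧ IsVertexDisjoint φ

/-- The edge `e` covers the vertex `v` if `v` occurs on the path `φ(e)`. -/
def Covers (φ : G ⟶ H) (e : G.E) (v : H.V) : Prop :=
  v ∈ pathVertices (edgePath φ e)

/-- An isolated vertex: a vertex incident to no edge. -/
def IsolatedVertex (G : CausalNet) (v : G.V) : Prop :=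
  ∀ e : G.E, G.src e ≠ v ∧ G.tgt e ≠ v

/-- A subdivision morphism: a topological embedding such that every non-isolated
vertex of the codomain is covered and every isolated vertex of the codomain is a
simple-vertex. -/
def IsSubdivisionMor (φ : G ⟶ H) : Prop :=
  IsTopologicalEmbedding φ ∧
  (∀ v : H.V, ¬ IsolatedVertex H v → ∃ e : G.E, Covers φ e v) ∧
  (∀ v : H.V, IsolatedVertex H v → ∃! w : G.V, vmap φ w = v)

theorem mapPath_length {V W : Type} [Quiver V] [Quiver W] (F : V ⥤q W) :
    ∀ {a b : V} (p : Quiver.Path a b), (F.mapPath p).length = p.length := by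
  intro a b p
  induction p with
  | nil => rfl
  | cons q f ih =>
      show ((F.mapPath q).cons (F.map f)).length = (q.cons f).length
      rw [Quiver.Path.length_cons, Quiver.Path.length_cons, ih]

theorem noCycleData_of_map {V₁ E₁ : Type} (s₁ t₁ : E₁ → V₁) (G : CausalNet)
    (f : V₁ → G.V) (g : E₁ → G.E)
    (hs : ∀ e, G.src (g e) = f (s₁ e)) (ht : ∀ e, G.tgt (g e) = f (t₁ e)) :
    NoCycleData V₁ E₁ s₁ t₁ := by
  letI : Quiver V₁ := ⟨fun a b => { e : E₁ // s₁ e = a ∧ t₁ e = b }⟩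
  intro v p
  let F : V₁ ⥤q G.V :=
    { obj := f
      map := fun {a b} e =>
        ⟨g (Subtype.val e), by rw [hs, (Subtype.prop e).1], by rw [ht, (Subtype.prop e).2]⟩ }
  have h := G.acyclic (f v) (F.mapPath p)
  rw [mapPath_length] at h
  exact h

theorem noCycleData_of_lt {V E : Type} [Preorder V] (s t : E → V)
    (hlt : ∀ e, s e < t e) : NoCycleData V E s t := by
  letI : Quiver V := ⟨fun a b => { e : E // s e = a ∧ t e = b }⟩
  have key : ∀ {a b : V} (p : Quiver.Path a b), (a = b ∧ p.length = 0) ∨ a < b := by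
    intro a b p
    induction p with
    | nil => exact Or.inl ⟨rfl, rfl⟩
    | cons q f ih =>
        have hcb := hlt (Subtype.val f)
        rw [(Subtype.prop f).1, (Subtype.prop f).2] at hcb
        rcases ih with ⟨h, _⟩ | h
        · exact Or.inr (by rw [h]; exact hcb)
        · exact Or.inr (lt_trans h hcb)
  intro v p
  rcases key p with ⟨_, h⟩ | h
  · exact h
  · exact absurd h (lt_irrefl v)

/-- The sub-causal-net spanned by a set of vertices and a set of edges. -/
noncomputable def mkSub (G : CausalNet) (Vs : Set G.V) (Es : Set G.E)
    (hs : ∀ e ∈ Es, G.src e ∈ Vs) (ht : ∀ e ∈ Es, G.tgt e ∈ Vs) : CausalNet where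
  V := Vs
  E := Es
  src e := ⟨G.src e.1, hs e.1 e.2⟩
  tgt e := ⟨G.tgt e.1, ht e.1 e.2⟩
  fintypeV := Fintype.ofFinite _
  fintypeE := Fintype.ofFinite _
  acyclic := noCycleData_of_map _ _ G Subtype.val Subtype.val (fun _ => rfl) (fun _ => rfl)

/-- The fiber of a morphism at a vertex `v` of the codomain: the sub-causal-net
of the domain on the vertices mapped to `v` and the edges mapped to the identity
path at `v`. -/
noncomputable def fiber (φ : G ⟶ H) (v : H.V) : CausalNet :=
  mkSub G {w : G.V | vmap φ w = v}
    {e : G.E | IsContractionEdge φ e ∧ vmap φ (G.src e) = v}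
    (fun _ he => he.2)
    (fun e he =>
      show vmap φ (G.tgt e) = v from
        Quiver.Path.eq_of_length_zero (edgePath φ e) he.1 ▸ he.2)

/-- The underlying undirected (simple) graph of a causal-net. -/
def undirected (G : CausalNet) : SimpleGraph G.V where
  Adj v w := v ≠ w ∧ ∃ e : G.E, (G.src e = v ∧ G.tgt e = w) ∨ (G.src e = w ∧ G.tgt e = v)
  symm := by
    constructor
    rintro v w ⟨hne, e, he⟩
    exact ⟨hne.symm, e, he.symm⟩
  loopless := by
    constructor
    intro v h
    exact h.1 rfl

/-- A causal-net is connected if its underlying undirected graph is connected. -/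
def Connected (G : CausalNet) : Prop := (undirected G).Connected

/-- A causal-Tree: a causal-net whose simplification has a tree as underlying
undirected graph.  (Since a causal-net is acyclic, the underlying undirected
graph of its simplification is exactly `undirected G`.) -/
def IsCausalTree (G : CausalNet) : Prop := (undirected G).IsTree

/-- A contraction: a vertex-coarse-graining all of whose fibers are connected. -/
def IsContractionMor (φ : G ⟶ H) : Prop :=
  IsVertexCoarseGraining φ ∧ ∀ v : H.V, Connected (fiber φ v)

/-- A simple contraction: a contraction with exactly one non-trivial fiber, that
fiber consisting of two vertices together with all edges from the first to the
second. -/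
def IsSimpleContraction (φ : G ⟶ H) : Prop :=
  IsContractionMor φ ∧
  ∃ w₁ w₂ : G.V, w₁ ≠ w₂ ∧ vmap φ w₁ = vmap φ w₂ ∧
    (∃ e : G.E, G.src e = w₁ ∧ G.tgt e = w₂) ∧
    (∀ e : G.E, IsContractionEdge φ e ↔ (G.src e = w₁ ∧ G.tgt e = w₂)) ∧
    (∀ u u' : G.V, vmap φ u = vmap φ u' →
      u = u' ∨ ((u = w₁ ∨ u = w₂) ∧ (u' = w₁ ∨ u' = w₂)))

/-- A tree-contraction: a contraction all of whose fibers are causal-Trees. -/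
def IsTreeContraction (φ : G ⟶ H) : Prop :=
  IsContractionMor φ ∧ ∀ v : H.V, IsCausalTree (fiber φ v)

/-- A directed multi-path: a causal-net whose simplification is a directed path. -/
def IsDirectedMultiPath (K : CausalNet) : Prop :=
  ∃ (a b : K.V) (p : Quiver.Path a b),
    (pathVertices p).Nodup ∧ (∀ v : K.V, v ∈ pathVertices p) ∧
    ∀ e : K.E, ∃ h ∈ pathEdges p, K.src e = K.src h ∧ K.tgt e = K.tgt h

/-- A path-contraction: a vertex-coarse-graining all of whose fibers are
directed multi-paths. -/
def IsPathContraction (φ : G ⟶ H) : Prop :=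
  IsVertexCoarseGraining φ ∧ ∀ v : H.V, IsDirectedMultiPath (fiber φ v)

/-- A point: a causal-net with exactly one vertex and no edges. -/
def IsPoint (A : CausalNet) : Prop := (∃ v : A.V, ∀ w : A.V, w = v) ∧ IsEmpty A.E

/-- Reachability: there is a directed path from `a` to `b`. -/
def Reaches (G : CausalNet) (a b : G.V) : Prop := Nonempty (Quiver.Path a b)

/-- A coclique: a set of vertices no two distinct members of which are
comparable under the reachability order. -/
def IsCoclique (G : CausalNet) (S : Set G.V) : Prop :=
  ∀ a ∈ S, ∀ b ∈ S, a ≠ b → ¬ Reaches G a b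

/-- A multi-edge: the nonempty set of all edges from one fixed vertex to another. -/
def IsMultiEdge (G : CausalNet) (s : Set G.E) : Prop :=
  s.Nonempty ∧ ∃ a b : G.V, s = {e : G.E | G.src e = a ∧ G.tgt e = b}

/-- The pair of vertices whose multi-edge is contracted by a simple contraction. -/
def ContractedPair (φ : G ⟶ H) (w₁ w₂ : G.V) : Prop :=
  w₁ ≠ w₂ ∧ vmap φ w₁ = vmap φ w₂ ∧ (∃ e : G.E, G.src e = w₁ ∧ G.tgt e = w₂) ∧
  ∀ e : G.E, IsContractionEdge φ e ↔ (G.src e = w₁ ∧ G.tgt e = w₂)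

/-- Two causal-nets are isomorphic in `Cau`. -/
def IsIsomorphicTo (A B : CausalNet) : Prop := ∃ φ : A ⟶ B, IsIso φ

/-- A simple causal-net: at most one edge between any ordered pair of vertices. -/
def IsSimpleNet (G : CausalNet) : Prop :=
  ∀ e₁ e₂ : G.E, G.src e₁ = G.src e₂ → G.tgt e₁ = G.tgt e₂ → e₁ = e₂

/-- A harmonic causal-net: every fusion out of it is an isomorphism. -/
def Harmonic (G : CausalNet) : Prop :=
  ∀ (H : CausalNet) (φ : G ⟶ H), IsFusion φ → IsIso φ

/-- A hamiltonian path: a directed path visiting every vertex exactly once. -/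
def HasHamiltonianPath (G : CausalNet) : Prop :=
  ∃ (a b : G.V) (p : Quiver.Path a b),
    (pathVertices p).Nodup ∧ ∀ v : G.V, v ∈ pathVertices p

/-- Morphisms which can be written as a composition of finitely many morphisms
each satisfying `P`. -/
inductive IsCompOf (P : ∀ ⦃A B : CausalNet⦄, (A ⟶ B) → Prop) :
    ∀ {A B : CausalNet}, (A ⟶ B) → Prop
  | of {A B : CausalNet} (φ : A ⟶ B) : P φ → IsCompOf P φ
  | comp {A B C : CausalNet} (φ : A ⟶ B) (ψ : B ⟶ C) :
      IsCompOf P φ → IsCompOf P ψ → IsCompOf P (φ ≫ ψ)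


/-!
A coarse-graining sends every edge to a path of length at most one. The middle net `segmentNet lam`
has the vertices of `G₂` and one edge for each segment of `lam`; the vertex-coarse-graining
collapses the contractions of `lam` and keeps its segments, and the edge-coarse-graining sends a
segment to its image edge.

For uniqueness, the edge-coarse-graining of a factorization is injective on vertices and sends
each edge to a single edge, so the vertex-coarse-graining contracts exactly the contractions of
`lam`. Matching the images of each segment of `lam` under the two vertex-coarse-grainings is well
defined because these have no multiple-edge, and it gives the isomorphism. A path is determined by
its endpoints and its list of edges, so all identities between morphisms reduce to identities
between edge lists.
-/

section Paths

@[simp]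
theorem pathEdges_nil (a : G.V) : pathEdges (Quiver.Path.nil : Quiver.Path a a) = [] :=
  pathEdges.eq_1 a

@[simp]
theorem pathEdges_cons {a b c : G.V} (p : Quiver.Path a b) (f : b ⟶ c) :
    pathEdges (p.cons f) = pathEdges p ++ [homEdge f] :=
  pathEdges.eq_2 a c b p f

@[simp]
theorem pathEdges_toPath {a b : G.V} (f : a ⟶ b) : pathEdges f.toPath = [homEdge f] := by
  simp [Quiver.Hom.toPath]

theorem pathEdges_length {a b : G.V} (p : Quiver.Path a b) :
    (pathEdges p).length = p.length := by
  induction p with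
  | nil => simp
  | cons q f ih => simp [ih]

theorem pathEdges_comp {a b c : G.V} (p : Quiver.Path a b) (q : Quiver.Path b c) :
    pathEdges (p.comp q) = pathEdges p ++ pathEdges q := by
  induction q with
  | nil => simp
  | cons q f ih => simp [ih]

theorem pathEdges_cast {a b a' b' : G.V} (ha : a = a') (hb : b = b') (p : Quiver.Path a b) :
    pathEdges (p.cast ha hb) = pathEdges p := by
  subst ha hb
  rfl

theorem src_tgt_of_pathEdges_eq_singleton {a b : G.V} {p : Quiver.Path a b} {h : G.E}
    (hp : pathEdges p = [h]) : G.src h = a ∧ G.tgt h = b := by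
  cases p with
  | nil => simp at hp
  | cons q f =>
    rw [pathEdges_cons] at hp
    obtain ⟨hq, hf⟩ := List.append_inj' (hp.trans (List.nil_append [h]).symm) rfl
    obtain rfl : homEdge f = h := List.singleton_inj.mp hf
    have hac := Quiver.Path.eq_of_length_zero q (by rw [← pathEdges_length, hq]; rfl)
    exact ⟨f.2.1.trans hac.symm, f.2.2⟩

theorem eq_of_pathEdges_eq {a b : G.V} {p q : Quiver.Path a b}
    (h : pathEdges p = pathEdges q) : p = q := by
  induction p with
  | nil =>
    cases q with
    | nil => rfl
    | cons q f => simp at h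
  | cons p f ih =>
    cases q with
    | nil => simp at h
    | cons q g =>
      obtain ⟨e, hs, ht⟩ := f
      obtain ⟨e', hs', ht'⟩ := g
      rw [pathEdges_cons, pathEdges_cons] at h
      obtain ⟨hpq, he⟩ := List.append_inj' h rfl
      obtain rfl : e = e' := List.singleton_inj.mp he
      subst hs hs'
      rw [ih hpq]

theorem heq_of_pathEdges_eq {a b a' b' : G.V} {p : Quiver.Path a b} {q : Quiver.Path a' b'}
    (ha : a = a') (hb : b = b') (h : pathEdges p = pathEdges q) : p ≍ q := by
  subst ha hb
  exact heq_of_eq (eq_of_pathEdges_eq h)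

end Paths

section Morphisms

theorem hom_ext {φ ψ : G ⟶ H} (hv : ∀ v, vmap φ v = vmap ψ v)
    (he : ∀ e, pathEdges (edgePath φ e) = pathEdges (edgePath ψ e)) : φ = ψ := by
  refine Paths.ext_functor (funext hv) fun a b f => (conj_eqToHom_iff_heq' _ _ _ _).mpr ?_
  obtain ⟨e, rfl, rfl⟩ := f
  exact heq_of_pathEdges_eq (hv _) (hv _) (he e)

def ofEdgePaths (f : G.V → H.V) (p : ∀ e : G.E, Quiver.Path (f (G.src e)) (f (G.tgt e))) :
    G ⟶ H :=
  Paths.lift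
    { obj := f
      map := fun e => (p e.1).cast (congrArg f e.2.1) (congrArg f e.2.2) }

theorem edgePath_ofEdgePaths (f : G.V → H.V)
    (p : ∀ e : G.E, Quiver.Path (f (G.src e)) (f (G.tgt e))) (e : G.E) :
    edgePath (ofEdgePaths f p) e = p e :=
  Paths.lift_toPath _ (edgeHom G e)

theorem vmap_comp (φ : G ⟶ H) (ψ : H ⟶ K) (v : G.V) : vmap (φ ≫ ψ) v = vmap ψ (vmap φ v) :=
  rfl

theorem pathEdges_pmap (φ : G ⟶ H) {a b : G.V} (p : Quiver.Path a b) :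
    pathEdges (pmap φ p) = (pathEdges p).flatMap fun e => pathEdges (edgePath φ e) := by
  induction p with
  | nil =>
    have hnil : pmap φ (Quiver.Path.nil : Quiver.Path a a) = Quiver.Path.nil :=
      (φ : Paths G.V ⥤ Paths H.V).map_id a
    simp [hnil]
  | cons q f ih =>
    obtain ⟨e, rfl, rfl⟩ := f
    have hcons : pmap φ (q.cons (edgeHom G e)) = (pmap φ q).comp (edgePath φ e) :=
      (φ : Paths G.V ⥤ Paths H.V).map_comp q (edgeHom G e).toPath
    change pathEdges (pmap φ (q.cons (edgeHom G e))) = _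
    rw [hcons, pathEdges_comp, ih, pathEdges_cons, List.flatMap_append, List.flatMap_singleton]
    rfl

theorem pathEdges_edgePath_comp (φ : G ⟶ H) (ψ : H ⟶ K) (e : G.E) :
    pathEdges (edgePath (φ ≫ ψ) e) =
      (pathEdges (edgePath φ e)).flatMap fun h => pathEdges (edgePath ψ h) :=
  pathEdges_pmap ψ (edgePath φ e)

theorem pathEdges_edgePath_id (e : G.E) : pathEdges (edgePath (𝟙 G) e) = [e] :=
  pathEdges_toPath (edgeHom G e)

end Morphisms

section EdgeKinds

variable {φ : G ⟶ H} {e : G.E}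

theorem isSegmentEdge_iff_exists_mapsToEdge : IsSegmentEdge φ e ↔ ∃ h, MapsToEdge φ e h := by
  rw [IsSegmentEdge, ← pathEdges_length, List.length_eq_one_iff]
  rfl

theorem MapsToEdge.isSegmentEdge {h : H.E} (hm : MapsToEdge φ e h) : IsSegmentEdge φ e :=
  isSegmentEdge_iff_exists_mapsToEdge.mpr ⟨h, hm⟩

theorem MapsToEdge.src_tgt {h : H.E} (hm : MapsToEdge φ e h) :
    H.src h = vmap φ (G.src e) ∧ H.tgt h = vmap φ (G.tgt e) :=
  src_tgt_of_pathEdges_eq_singleton hm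

theorem MapsToEdge.unique {h h' : H.E} (hm : MapsToEdge φ e h) (hm' : MapsToEdge φ e h') :
    h = h' :=
  List.singleton_inj.mp (hm.symm.trans hm')

theorem IsContractionEdge.pathEdges_eq_nil (hc : IsContractionEdge φ e) :
    pathEdges (edgePath φ e) = [] :=
  List.eq_nil_of_length_eq_zero ((pathEdges_length _).trans hc)

theorem IsContractionEdge.vmap_src_eq_vmap_tgt (hc : IsContractionEdge φ e) :
    vmap φ (G.src e) = vmap φ (G.tgt e) :=
  Quiver.Path.eq_of_length_zero _ hc

theorem isContractionEdge_or_isSegmentEdge (hs : ¬ IsSubdivisionEdge φ e) :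
    IsContractionEdge φ e ∨ IsSegmentEdge φ e := by
  unfold IsSubdivisionEdge at hs
  unfold IsContractionEdge IsSegmentEdge
  omega

theorem IsEdgeCoarseGraining.isSegmentEdge (hφ : IsEdgeCoarseGraining φ) (e : G.E) :
    IsSegmentEdge φ e :=
  (isContractionEdge_or_isSegmentEdge (hφ.1.2 e)).resolve_left (hφ.2.2 e)

theorem length_edgePath_comp_of_isSegmentEdge {ψ : H ⟶ K} (hψ : ∀ h, IsSegmentEdge ψ h)
    (e : G.E) : (edgePath (φ ≫ ψ) e).length = (edgePath φ e).length := by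
  simp only [IsSegmentEdge] at hψ
  rw [← pathEdges_length, ← pathEdges_length, pathEdges_edgePath_comp, List.length_flatMap]
  simp [pathEdges_length, hψ]

end EdgeKinds

section Construction

variable {G₁ G₂ : CausalNet} (lam : G₁ ⟶ G₂)

/-- Reducible, so that `vmap lam : G₁.V → G₂.V` can serve as a vertex map into this net. -/
noncomputable abbrev segmentNet : CausalNet where
  V := G₂.V
  E := { e : G₁.E // IsSegmentEdge lam e }
  src e := vmap lam (G₁.src e.1)
  tgt e := vmap lam (G₁.tgt e.1)
  fintypeV := G₂.fintypeV
  fintypeE := Fintype.ofFinite _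
  acyclic :=
    noCycleData_of_map _ _ G₂ id
      (fun e => (isSegmentEdge_iff_exists_mapsToEdge.mp e.2).choose)
      (fun e => (isSegmentEdge_iff_exists_mapsToEdge.mp e.2).choose_spec.src_tgt.1)
      (fun e => (isSegmentEdge_iff_exists_mapsToEdge.mp e.2).choose_spec.src_tgt.2)

variable (hlam : ∀ e, ¬ IsSubdivisionEdge lam e)

open Classical in
noncomputable def toSegmentNet : G₁ ⟶ segmentNet lam :=
  ofEdgePaths (H := segmentNet lam) (vmap lam : G₁.V → G₂.V) fun e =>
    if he : IsSegmentEdge lam e then (edgeHom (segmentNet lam) ⟨e, he⟩).toPath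
    else Quiver.Path.nil.cast rfl
      ((isContractionEdge_or_isSegmentEdge (hlam e)).resolve_right he).vmap_src_eq_vmap_tgt

open Classical in
theorem pathEdges_edgePath_toSegmentNet (e : G₁.E) :
    pathEdges (edgePath (toSegmentNet lam hlam) e) =
      if he : IsSegmentEdge lam e then [⟨e, he⟩] else [] := by
  refine (congrArg pathEdges (edgePath_ofEdgePaths (H := segmentNet lam) _ _ e)).trans ?_
  by_cases he : IsSegmentEdge lam e
  · rw [dif_pos he, dif_pos he]
    exact pathEdges_toPath _
  · rw [dif_neg he, dif_neg he]
    exact (pathEdges_cast _ _ _).trans (pathEdges_nil _)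

noncomputable def fromSegmentNet : segmentNet lam ⟶ G₂ :=
  ofEdgePaths (G := segmentNet lam) id fun k => edgePath lam k.1

theorem edgePath_fromSegmentNet (k : (segmentNet lam).E) :
    edgePath (fromSegmentNet lam) k = edgePath lam k.1 :=
  edgePath_ofEdgePaths (G := segmentNet lam) _ _ k

theorem eq_of_mapsToEdge_toSegmentNet {e : G₁.E} {k : (segmentNet lam).E}
    (hm : MapsToEdge (toSegmentNet lam hlam) e k) : e = k.1 := by
  unfold MapsToEdge at hm
  rw [pathEdges_edgePath_toSegmentNet] at hm
  split_ifs at hm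
  rw [← List.singleton_inj.mp hm]

theorem isVertexCoarseGraining_toSegmentNet (hv : ∀ v, ∃ w, vmap lam w = v) :
    IsVertexCoarseGraining (toSegmentNet lam hlam) := by
  refine ⟨⟨⟨hv, fun k => ⟨k.1, ?_⟩⟩, fun e hs => ?_⟩, fun k e₁ e₂ h₁ h₂ => ?_⟩
  · rw [MapsToEdge, pathEdges_edgePath_toSegmentNet, dif_pos k.2]
  · rw [IsSubdivisionEdge, ← pathEdges_length, pathEdges_edgePath_toSegmentNet] at hs
    split_ifs at hs <;> simp at hs
  · rw [eq_of_mapsToEdge_toSegmentNet lam hlam h₁, eq_of_mapsToEdge_toSegmentNet lam hlam h₂]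

theorem isEdgeCoarseGraining_fromSegmentNet (he : ∀ h, ∃ e, MapsToEdge lam e h) :
    IsEdgeCoarseGraining (fromSegmentNet lam) := by
  have hseg (k : (segmentNet lam).E) : (edgePath (fromSegmentNet lam) k).length = 1 := by
    rw [edgePath_fromSegmentNet]
    exact k.2
  refine ⟨⟨⟨fun v => ⟨v, rfl⟩, fun h => ?_⟩, fun k hk => ?_⟩, fun _ _ => id, fun k hk => ?_⟩
  · obtain ⟨e, hm⟩ := he h
    refine ⟨⟨e, hm.isSegmentEdge⟩, ?_⟩
    rw [MapsToEdge, edgePath_fromSegmentNet]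
    exact hm
  · simp [IsSubdivisionEdge, hseg] at hk
  · simp [IsContractionEdge, hseg] at hk

theorem toSegmentNet_comp_fromSegmentNet : toSegmentNet lam hlam ≫ fromSegmentNet lam = lam :=
  hom_ext (fun _ => rfl) fun e => by
    rw [pathEdges_edgePath_comp, pathEdges_edgePath_toSegmentNet]
    split_ifs with he
    · rw [List.flatMap_singleton, edgePath_fromSegmentNet]
      rfl
    · exact ((isContractionEdge_or_isSegmentEdge (hlam e)).resolve_right he).pathEdges_eq_nil.symm

end Construction

section Uniqueness

variable {G₁ G₂ K K' : CausalNet} {lam : G₁ ⟶ G₂}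

structure IsVertexEdgeFactorization (lam : G₁ ⟶ G₂) (lν : G₁ ⟶ K) (lε : K ⟶ G₂) : Prop where
  isVertexCoarseGraining : IsVertexCoarseGraining lν
  isEdgeCoarseGraining : IsEdgeCoarseGraining lε
  comp_eq : lν ≫ lε = lam

namespace IsVertexEdgeFactorization

variable {lν : G₁ ⟶ K} {lε : K ⟶ G₂} {lν' : G₁ ⟶ K'} {lε' : K' ⟶ G₂}
  (D : IsVertexEdgeFactorization lam lν lε) (D' : IsVertexEdgeFactorization lam lν' lε')

include D in
theorem vmap_vmap (w : G₁.V) : vmap lε (vmap lν w) = vmap lam w := by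
  rw [← D.comp_eq, vmap_comp]

include D in
theorem length_edgePath (e : G₁.E) : (edgePath lν e).length = (edgePath lam e).length := by
  rw [← D.comp_eq, length_edgePath_comp_of_isSegmentEdge D.isEdgeCoarseGraining.isSegmentEdge]

include D in
theorem pathEdges_edgePath_of_mapsToEdge {e : G₁.E} {k : K.E} (hm : MapsToEdge lν e k) :
    pathEdges (edgePath lε k) = pathEdges (edgePath lam e) := by
  rw [← D.comp_eq, pathEdges_edgePath_comp, hm, List.flatMap_singleton]

include D in
theorem isContractionEdge_iff {e : G₁.E} : IsContractionEdge lν e ↔ IsContractionEdge lam e := by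
  rw [IsContractionEdge, IsContractionEdge, D.length_edgePath]

include D in
theorem isSegmentEdge_iff {e : G₁.E} : IsSegmentEdge lν e ↔ IsSegmentEdge lam e := by
  rw [IsSegmentEdge, IsSegmentEdge, D.length_edgePath]

include D D' in
theorem exists_mapsToEdge_mapsToEdge (k : K.E) :
    ∃ k' : K'.E, ∃ e : G₁.E, MapsToEdge lν e k ∧ MapsToEdge lν' e k' := by
  obtain ⟨e, he⟩ := D.isVertexCoarseGraining.1.1.2 k
  have hseg : IsSegmentEdge lν' e :=
    D'.isSegmentEdge_iff.mpr (D.isSegmentEdge_iff.mp he.isSegmentEdge)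
  obtain ⟨k', hk'⟩ := isSegmentEdge_iff_exists_mapsToEdge.mp hseg
  exact ⟨k', e, he, hk'⟩

noncomputable def comparisonVertex (φ : G₁ ⟶ K') (v : K.V) : K'.V :=
  vmap φ (D.isVertexCoarseGraining.1.1.1 v).choose

include D' in
theorem comparisonVertex_vmap (w : G₁.V) : comparisonVertex D lν' (vmap lν w) = vmap lν' w := by
  apply D'.isEdgeCoarseGraining.2.1
  rw [comparisonVertex, D'.vmap_vmap, D'.vmap_vmap, ← D.vmap_vmap, ← D.vmap_vmap,
    (D.isVertexCoarseGraining.1.1.1 (vmap lν w)).choose_spec]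

noncomputable def comparisonEdge (k : K.E) : K'.E :=
  (exists_mapsToEdge_mapsToEdge D D' k).choose

theorem comparisonEdge_spec (k : K.E) :
    ∃ e : G₁.E, MapsToEdge lν e k ∧ MapsToEdge lν' e (comparisonEdge D D' k) :=
  (exists_mapsToEdge_mapsToEdge D D' k).choose_spec

theorem comparisonEdge_eq {e : G₁.E} {k : K.E} {k' : K'.E} (he : MapsToEdge lν e k)
    (he' : MapsToEdge lν' e k') : comparisonEdge D D' k = k' := by
  obtain ⟨e₀, h₀, h₀'⟩ := comparisonEdge_spec D D' k
  obtain rfl := D.isVertexCoarseGraining.2 k e₀ e h₀ he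
  exact h₀'.unique he'

theorem src_tgt_comparisonEdge (k : K.E) :
    K'.src (comparisonEdge D D' k) = comparisonVertex D lν' (K.src k) ∧
      K'.tgt (comparisonEdge D D' k) = comparisonVertex D lν' (K.tgt k) := by
  obtain ⟨e, he, he'⟩ := comparisonEdge_spec D D' k
  rw [he'.src_tgt.1, he'.src_tgt.2, he.src_tgt.1, he.src_tgt.2, comparisonVertex_vmap D D',
    comparisonVertex_vmap D D']
  exact ⟨rfl, rfl⟩

noncomputable def comparison : K ⟶ K' :=
  ofEdgePaths (comparisonVertex D lν') fun k =>
    Quiver.Hom.toPath (V := K'.V)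
      ⟨comparisonEdge D D' k, (src_tgt_comparisonEdge D D' k).1,
        (src_tgt_comparisonEdge D D' k).2⟩

theorem vmap_comparison : vmap (comparison D D') = comparisonVertex D lν' :=
  rfl

theorem pathEdges_edgePath_comparison (k : K.E) :
    pathEdges (edgePath (comparison D D') k) = [comparisonEdge D D' k] := by
  rw [comparison, edgePath_ofEdgePaths]
  exact pathEdges_toPath _

theorem comp_comparison : lν ≫ comparison D D' = lν' :=
  hom_ext (comparisonVertex_vmap D D') fun e => by
    rw [pathEdges_edgePath_comp]
    rcases isContractionEdge_or_isSegmentEdge (D.isVertexCoarseGraining.1.2 e) with hc | hs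
    · have hc' : IsContractionEdge lν' e :=
        D'.isContractionEdge_iff.mpr (D.isContractionEdge_iff.mp hc)
      rw [hc.pathEdges_eq_nil, hc'.pathEdges_eq_nil, List.flatMap_nil]
    · have hs' : IsSegmentEdge lν' e := D'.isSegmentEdge_iff.mpr (D.isSegmentEdge_iff.mp hs)
      obtain ⟨k, hk⟩ := isSegmentEdge_iff_exists_mapsToEdge.mp hs
      obtain ⟨k', hk'⟩ := isSegmentEdge_iff_exists_mapsToEdge.mp hs'
      rw [hk, hk', List.flatMap_singleton, pathEdges_edgePath_comparison,
        comparisonEdge_eq D D' hk hk']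

theorem comparison_comp : comparison D D' ≫ lε' = lε := by
  refine hom_ext (fun v => ?_) fun k => ?_
  · obtain ⟨w, rfl⟩ := D.isVertexCoarseGraining.1.1.1 v
    rw [vmap_comp, vmap_comparison, comparisonVertex_vmap D D', D'.vmap_vmap, D.vmap_vmap]
  · obtain ⟨e, he, he'⟩ := comparisonEdge_spec D D' k
    rw [pathEdges_edgePath_comp, pathEdges_edgePath_comparison, List.flatMap_singleton,
      D'.pathEdges_edgePath_of_mapsToEdge he', D.pathEdges_edgePath_of_mapsToEdge he]

theorem comparison_comp_comparison : comparison D D' ≫ comparison D' D = 𝟙 K := by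
  refine hom_ext (fun v => ?_) fun k => ?_
  · obtain ⟨w, rfl⟩ := D.isVertexCoarseGraining.1.1.1 v
    rw [vmap_comp, vmap_comparison, vmap_comparison, comparisonVertex_vmap D D',
      comparisonVertex_vmap D' D]
    rfl
  · obtain ⟨e, he, he'⟩ := comparisonEdge_spec D D' k
    rw [pathEdges_edgePath_comp, pathEdges_edgePath_comparison, List.flatMap_singleton,
      pathEdges_edgePath_comparison, comparisonEdge_eq D' D he' he, pathEdges_edgePath_id]

end IsVertexEdgeFactorization

end Uniqueness

theorem coarseGraining_factorization {G₁ G₂ : CausalNet} (lam : G₁ ⟶ G₂)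
    (hlam : IsCoarseGraining lam) :
    (∃ (K : CausalNet) (lν : G₁ ⟶ K) (lε : K ⟶ G₂),
        IsVertexCoarseGraining lν ∧ IsEdgeCoarseGraining lε ∧ lν ≫ lε = lam) ∧
    (∀ (K K' : CausalNet) (lν : G₁ ⟶ K) (lε : K ⟶ G₂) (lν' : G₁ ⟶ K') (lε' : K' ⟶ G₂),
        IsVertexCoarseGraining lν → IsEdgeCoarseGraining lε → lν ≫ lε = lam →
        IsVertexCoarseGraining lν' → IsEdgeCoarseGraining lε' → lν' ≫ lε' = lam →
        ∃ φ : K ⟶ K', IsIso φ ∧ lν ≫ φ = lν' ∧ φ ≫ lε' = lε) := by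
  refine ⟨⟨segmentNet lam, toSegmentNet lam hlam.2, fromSegmentNet lam,
    isVertexCoarseGraining_toSegmentNet lam hlam.2 hlam.1.1,
    isEdgeCoarseGraining_fromSegmentNet lam hlam.1.2, toSegmentNet_comp_fromSegmentNet lam hlam.2⟩,
    fun K K' lν lε lν' lε' hν hε hcomp hν' hε' hcomp' => ?_⟩
  have D : IsVertexEdgeFactorization lam lν lε := ⟨hν, hε, hcomp⟩
  have D' : IsVertexEdgeFactorization lam lν' lε' := ⟨hν', hε', hcomp'⟩
  exact ⟨D.comparison D', ⟨D'.comparison D, D.comparison_comp_comparison D',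
    D'.comparison_comp_comparison D⟩, D.comp_comparison D', D.comparison_comp D'⟩

end CausalNets
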